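/- Let 𝒴 be a finite nonempty alphabet, n a positive integer, and 𝒬 a nonempty set of probability mass functions on 𝒴^n such that for every 𝐲 ∈ 𝒴^n there exists 𝐪 ∈ 𝒬 with 𝐪(𝐲) > 0. Then inf_𝐩̂ sup_(𝐲∈𝒴^n) sup_(𝐪∈𝒬) log(𝐪(𝐲)/𝐩̂(𝐲)) = sup_𝐩 Σ_(𝐲∈𝒴^n) 𝐩(𝐲) · sup_(𝐪∈𝒬) log(𝐪(𝐲)/𝐩(𝐲)), where 𝐩̂ and 𝐩 range over all probability mass functions on 𝒴^n, log(a/0) = +∞ for a > 0, terms of the sum with 𝐩(𝐲) = 0 contribute 0, and both sides are interpreted in the extended reals. -/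
import Mathlib


open scoped BigOperators

/-- Extended-real logarithm: log x for x > 0 and −∞ for x ≤ 0.  With this convention,
`elog a - elog b` is the extended-real value of log(a/b): it equals +∞ when a > 0 and
b = 0, and −∞ when a = 0. -/
noncomputable def elog (x : ℝ) : EReal := if x ≤ 0 then ⊥ else ((Real.log x : ℝ) : EReal)

lemma elog_of_pos {x : ℝ} (hx : 0 < x) : elog x = ((Real.log x : ℝ) : EReal) := by
  simp [elog, not_le.mpr hx]

lemma ereal_coe_sum {α : Type*} (s : Finset α) (f : α → ℝ) :
    ((∑ i ∈ s, f i : ℝ) : EReal) = ∑ i ∈ s, ((f i : ℝ) : EReal) :=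
  map_sum (⟨⟨Real.toEReal, EReal.coe_zero⟩, EReal.coe_add⟩ : ℝ →+ EReal) f s

/-- Shtarkov duality / dual form of the minimax regret: for a finite nonempty
alphabet 𝒴, n ≥ 1, and a nonempty class 𝒬 of probability mass functions on 𝒴^n such that
every sequence receives positive probability from some member of 𝒬,
inf_𝐩̂ sup_𝐲 sup_𝐪 log(𝐪(𝐲)/𝐩̂(𝐲)) = sup_𝐩 Σ_𝐲 𝐩(𝐲)·sup_𝐪 log(𝐪(𝐲)/𝐩(𝐲)),
where 𝐩̂, 𝐩 range over probability mass functions on 𝒴^n, log(a/0) = +∞ for a > 0, terms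
with 𝐩(𝐲) = 0 contribute 0, and both sides are extended reals. -/
theorem stmt6 {Y : Type*} [Fintype Y] [Nonempty Y] (n : ℕ) (hn : 0 < n)
    (Q : Set ((Fin n → Y) → ℝ)) (hQne : Q.Nonempty)
    (hQpmf : ∀ q ∈ Q, (∀ y, 0 ≤ q y) ∧ ∑ y, q y = 1)
    (hQpos : ∀ y : Fin n → Y, ∃ q ∈ Q, 0 < q y) :
    (⨅ phat : {π : (Fin n → Y) → ℝ // (∀ y, 0 ≤ π y) ∧ ∑ y, π y = 1},
        ⨆ y : Fin n → Y, ⨆ q ∈ Q, (elog (q y) - elog (phat.1 y))) =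
      (⨆ π : {π : (Fin n → Y) → ℝ // (∀ y, 0 ≤ π y) ∧ ∑ y, π y = 1},
        ∑ y : Fin n → Y,
          if π.1 y = 0 then 0
          else ((π.1 y : ℝ) : EReal) * ⨆ q ∈ Q, (elog (q y) - elog (π.1 y))) := by
  classical
  -- the Shtarkov maximal-likelihood function and Shtarkov sum
  have hbdd : ∀ y : Fin n → Y, BddAbove ((fun q => q y) '' Q) := by
    intro y
    refine ⟨1, ?_⟩
    rintro _ ⟨q, hq, rfl⟩
    calc q y ≤ ∑ z, q z :=
          Finset.single_le_sum (fun z _ => (hQpmf q hq).1 z) (Finset.mem_univ y)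
      _ = 1 := (hQpmf q hq).2
  set s : (Fin n → Y) → ℝ := fun y => sSup ((fun q => q y) '' Q) with hs_def
  have hs_pos : ∀ y, 0 < s y := by
    intro y
    obtain ⟨q, hq, hqy⟩ := hQpos y
    exact lt_of_lt_of_le hqy (le_csSup (hbdd y) ⟨q, hq, rfl⟩)
  have hle_s : ∀ q ∈ Q, ∀ y, q y ≤ s y := fun q hq y => le_csSup (hbdd y) ⟨q, hq, rfl⟩
  set S : ℝ := ∑ y, s y with hS_def
  have hS_pos : 0 < S := Finset.sum_pos (fun y _ => hs_pos y) Finset.univ_nonempty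
  -- key computation: the inner sup over Q
  have haux : ∀ (y : Fin n → Y) (r : ℝ),
      (⨆ q ∈ Q, (elog (q y) - ((r : ℝ) : EReal))) = ((Real.log (s y) - r : ℝ) : EReal) := by
    intro y r
    apply le_antisymm
    · refine iSup₂_le fun q hq => ?_
      have h1 : elog (q y) ≤ ((Real.log (s y) : ℝ) : EReal) := by
        by_cases h : q y ≤ 0
        · simp [elog, h]
        · rw [elog_of_pos (not_le.mp h)]
          exact_mod_cast Real.log_le_log (not_le.mp h) (hle_s q hq y)
      calc elog (q y) - ((r : ℝ) : EReal)
          ≤ ((Real.log (s y) : ℝ) : EReal) - ((r : ℝ) : EReal) := EReal.sub_le_sub h1 le_rfl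
        _ = ((Real.log (s y) - r : ℝ) : EReal) := (EReal.coe_sub _ _).symm
    · rw [le_iSup_iff]
      intro b hb
      have hb' : ∀ q ∈ Q, elog (q y) - ((r : ℝ) : EReal) ≤ b := fun q hq =>
        le_trans (le_iSup (fun _ : q ∈ Q => elog (q y) - ((r : ℝ) : EReal)) hq) (hb q)
      induction b using EReal.rec with
      | bot =>
        obtain ⟨q, hq, hqy⟩ := hQpos y
        have h := hb' q hq
        rw [elog_of_pos hqy, ← EReal.coe_sub, le_bot_iff] at h
        exact absurd h (EReal.coe_ne_bot _)
      | coe c =>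
        have hkey : s y ≤ Real.exp (c + r) := by
          obtain ⟨q0, hq0, hq0y⟩ := hQpos y
          have hne : ((fun q => q y) '' Q).Nonempty := ⟨q0 y, ⟨q0, hq0, rfl⟩⟩
          refine csSup_le hne ?_
          rintro _ ⟨q, hq, rfl⟩
          by_cases h : q y ≤ 0
          · exact le_trans h (Real.exp_pos _).le
          · have h2 := hb' q hq
            rw [elog_of_pos (not_le.mp h), ← EReal.coe_sub, EReal.coe_le_coe_iff] at h2
            calc q y = Real.exp (Real.log (q y)) := (Real.exp_log (not_le.mp h)).symm
              _ ≤ Real.exp (c + r) := Real.exp_le_exp.mpr (by linarith)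
        have h3 : Real.log (s y) ≤ c + r := (Real.log_le_iff_le_exp (hs_pos y)).mpr hkey
        exact_mod_cast (by linarith : Real.log (s y) - r ≤ c)
      | top => exact le_top
  -- the normalized maximal-likelihood distribution
  set pstar : (Fin n → Y) → ℝ := fun y => s y / S with hpstar_def
  have hpstar_pos : ∀ y, 0 < pstar y := fun y => div_pos (hs_pos y) hS_pos
  have hpstar_sum : ∑ y, pstar y = 1 := by
    rw [hpstar_def, ← Finset.sum_div]
    exact div_self hS_pos.ne'
  have hpstar_mem : (∀ y, 0 ≤ pstar y) ∧ ∑ y, pstar y = 1 :=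
    ⟨fun y => (hpstar_pos y).le, hpstar_sum⟩
  have helog_pstar : ∀ y, elog (pstar y) = ((Real.log (s y) - Real.log S : ℝ) : EReal) := by
    intro y
    rw [elog_of_pos (hpstar_pos y), hpstar_def]
    norm_cast
    exact Real.log_div (hs_pos y).ne' hS_pos.ne'
  -- Claim 1: LHS ≤ log S
  have hL_le : (⨅ phat : {π : (Fin n → Y) → ℝ // (∀ y, 0 ≤ π y) ∧ ∑ y, π y = 1},
      ⨆ y : Fin n → Y, ⨆ q ∈ Q, (elog (q y) - elog (phat.1 y))) ≤
      ((Real.log S : ℝ) : EReal) := by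
    refine iInf_le_of_le ⟨pstar, hpstar_mem⟩ ?_
    refine iSup_le fun y => ?_
    have h1 : elog ((⟨pstar, hpstar_mem⟩ :
        {π : (Fin n → Y) → ℝ // (∀ y, 0 ≤ π y) ∧ ∑ y, π y = 1}).1 y) =
        ((Real.log (s y) - Real.log S : ℝ) : EReal) := helog_pstar y
    rw [h1, haux y (Real.log (s y) - Real.log S)]
    exact_mod_cast le_of_eq (by ring)
  -- Claim 2: log S ≤ LHS
  have hle_L : ((Real.log S : ℝ) : EReal) ≤
      (⨅ phat : {π : (Fin n → Y) → ℝ // (∀ y, 0 ≤ π y) ∧ ∑ y, π y = 1},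
      ⨆ y : Fin n → Y, ⨆ q ∈ Q, (elog (q y) - elog (phat.1 y))) := by
    refine le_iInf fun phat => ?_
    by_cases hall : ∀ y, 0 < phat.1 y
    · have hex : ∃ y0, S * phat.1 y0 ≤ s y0 := by
        by_contra hco
        push_neg at hco
        have hlt : S < S := by
          calc S = ∑ y, s y := hS_def
            _ < ∑ y, S * phat.1 y :=
              Finset.sum_lt_sum_of_nonempty Finset.univ_nonempty (fun y _ => hco y)
            _ = S := by rw [← Finset.mul_sum, phat.2.2, mul_one]
        exact lt_irrefl _ hlt
      obtain ⟨y0, hy0⟩ := hex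
      have h1 : Real.log S ≤ Real.log (s y0) - Real.log (phat.1 y0) := by
        have h2 := Real.log_le_log (mul_pos hS_pos (hall y0)) hy0
        rw [Real.log_mul hS_pos.ne' (hall y0).ne'] at h2
        linarith
      refine le_trans ?_ (le_iSup _ y0)
      rw [elog_of_pos (hall y0), haux y0 (Real.log (phat.1 y0))]
      exact_mod_cast h1
    · push_neg at hall
      obtain ⟨y0, hy0⟩ := hall
      have hy0' : phat.1 y0 = 0 := le_antisymm hy0 (phat.2.1 y0)
      obtain ⟨q, hq, hqy⟩ := hQpos y0
      refine le_trans le_top ?_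
      refine le_trans ?_ (le_iSup _ y0)
      refine le_trans ?_ (le_iSup₂ (f := fun q (_ : q ∈ Q) => elog (q y0) - elog (phat.1 y0)) q hq)
      rw [elog_of_pos hqy, show elog (phat.1 y0) = ⊥ from by simp [elog, hy0'],
        EReal.coe_sub_bot]
  -- Claim 3: each dual value is ≤ log S
  have hR_le : ∀ π : {π : (Fin n → Y) → ℝ // (∀ y, 0 ≤ π y) ∧ ∑ y, π y = 1},
      (∑ y : Fin n → Y,
        if π.1 y = 0 then 0
        else ((π.1 y : ℝ) : EReal) * ⨆ q ∈ Q, (elog (q y) - elog (π.1 y))) ≤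
      ((Real.log S : ℝ) : EReal) := by
    intro π
    set p : (Fin n → Y) → ℝ := π.1 with hp_def
    set f : (Fin n → Y) → ℝ :=
      fun y => if p y = 0 then 0 else p y * (Real.log (s y) - Real.log (p y)) with hf_def
    have hterm : ∀ y : Fin n → Y,
        (if p y = 0 then (0 : EReal)
          else ((p y : ℝ) : EReal) * ⨆ q ∈ Q, (elog (q y) - elog (p y))) =
        ((f y : ℝ) : EReal) := by
      intro y
      by_cases h : p y = 0
      · simp [hf_def, h]
      · have hpy : 0 < p y := lt_of_le_of_ne (π.2.1 y) (Ne.symm h)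
        rw [if_neg h, hf_def]
        simp only [if_neg h]
        rw [elog_of_pos hpy, haux y (Real.log (p y)), ← EReal.coe_mul]
    calc (∑ y : Fin n → Y,
        if p y = 0 then (0 : EReal)
        else ((p y : ℝ) : EReal) * ⨆ q ∈ Q, (elog (q y) - elog (p y)))
        = ∑ y : Fin n → Y, ((f y : ℝ) : EReal) := Finset.sum_congr rfl fun y _ => hterm y
      _ = ((∑ y : Fin n → Y, f y : ℝ) : EReal) := (ereal_coe_sum _ _).symm
      _ ≤ ((Real.log S : ℝ) : EReal) := by
        rw [EReal.coe_le_coe_iff]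
        -- the real Jensen/Gibbs inequality
        set T : Finset (Fin n → Y) := Finset.univ.filter (fun y => p y ≠ 0) with hT_def
        have hsum_T : ∑ y : Fin n → Y, f y = ∑ y ∈ T, p y * (Real.log (s y) - Real.log (p y)) := by
          rw [hT_def, Finset.sum_filter]
          refine Finset.sum_congr rfl fun y _ => ?_
          by_cases h : p y = 0 <;> simp [hf_def, h]
        have hpT : ∑ y ∈ T, p y = 1 := by
          rw [hT_def, Finset.sum_filter_ne_zero]
          exact π.2.2
        have hT_pos : ∀ y ∈ T, 0 < p y := by
          intro y hy
          rw [hT_def, Finset.mem_filter] at hy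
          exact lt_of_le_of_ne (π.2.1 y) (Ne.symm hy.2)
        have hT_ne : T.Nonempty := by
          by_contra h
          rw [Finset.not_nonempty_iff_eq_empty] at h
          rw [h, Finset.sum_empty] at hpT
          norm_num at hpT
        set S' : ℝ := ∑ y ∈ T, s y with hS'_def
        have hS'_pos : 0 < S' := Finset.sum_pos (fun y hy => hs_pos y) hT_ne
        have hS'_le : S' ≤ S := by
          rw [hS'_def, hS_def]
          exact Finset.sum_le_sum_of_subset_of_nonneg (Finset.filter_subset _ _)
            (fun y _ _ => (hs_pos y).le)
        rw [hsum_T]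
        have hstep : ∑ y ∈ T, p y * (Real.log (s y) - Real.log (p y)) ≤ Real.log S' := by
          have h1 : ∀ y ∈ T, p y * (Real.log (s y) - Real.log (p y)) =
              p y * Real.log (s y / (p y * S')) + p y * Real.log S' := by
            intro y hy
            have hpy := hT_pos y hy
            rw [Real.log_div (hs_pos y).ne' (mul_pos hpy hS'_pos).ne',
              Real.log_mul hpy.ne' hS'_pos.ne']
            ring
          have h2 : ∀ y ∈ T, p y * Real.log (s y / (p y * S')) + p y * Real.log S' ≤
              (s y / S' - p y) + p y * Real.log S' := by
            intro y hy
            have hpy := hT_pos y hy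
            have h3 : Real.log (s y / (p y * S')) ≤ s y / (p y * S') - 1 :=
              Real.log_le_sub_one_of_pos (div_pos (hs_pos y) (mul_pos hpy hS'_pos))
            have h4 : p y * Real.log (s y / (p y * S')) ≤ p y * (s y / (p y * S') - 1) :=
              mul_le_mul_of_nonneg_left h3 hpy.le
            have h5 : p y * (s y / (p y * S') - 1) = s y / S' - p y := by
              field_simp
            linarith [h4, h5 ▸ h4]
          calc ∑ y ∈ T, p y * (Real.log (s y) - Real.log (p y))
              = ∑ y ∈ T, (p y * Real.log (s y / (p y * S')) + p y * Real.log S') :=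
                Finset.sum_congr rfl h1
            _ ≤ ∑ y ∈ T, ((s y / S' - p y) + p y * Real.log S') :=
                Finset.sum_le_sum h2
            _ = (∑ y ∈ T, s y) / S' - (∑ y ∈ T, p y) +
                (∑ y ∈ T, p y) * Real.log S' := by
                rw [Finset.sum_add_distrib, Finset.sum_sub_distrib, ← Finset.sum_div,
                  ← Finset.sum_mul]
            _ = Real.log S' := by
                rw [hpT, ← hS'_def, div_self hS'_pos.ne']
                ring
        exact hstep.trans (Real.log_le_log hS'_pos hS'_le)
  -- Claim 4: log S ≤ RHS
  have hle_R : ((Real.log S : ℝ) : EReal) ≤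
      (⨆ π : {π : (Fin n → Y) → ℝ // (∀ y, 0 ≤ π y) ∧ ∑ y, π y = 1},
        ∑ y : Fin n → Y,
          if π.1 y = 0 then 0
          else ((π.1 y : ℝ) : EReal) * ⨆ q ∈ Q, (elog (q y) - elog (π.1 y))) := by
    refine le_trans ?_ (le_iSup _ ⟨pstar, hpstar_mem⟩)
    have hterm : ∀ y : Fin n → Y,
        (if pstar y = 0 then (0 : EReal)
          else ((pstar y : ℝ) : EReal) * ⨆ q ∈ Q, (elog (q y) - elog (pstar y))) =
        ((pstar y * Real.log S : ℝ) : EReal) := by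
      intro y
      rw [if_neg (hpstar_pos y).ne', helog_pstar y,
        haux y (Real.log (s y) - Real.log S), ← EReal.coe_mul]
      norm_cast
      ring
    calc ((Real.log S : ℝ) : EReal)
        = ((∑ y : Fin n → Y, pstar y * Real.log S : ℝ) : EReal) := by
          rw [← Finset.sum_mul, hpstar_sum, one_mul]
      _ = ∑ y : Fin n → Y, ((pstar y * Real.log S : ℝ) : EReal) := ereal_coe_sum _ _
      _ = ∑ y : Fin n → Y,
          (if pstar y = 0 then (0 : EReal)
            else ((pstar y : ℝ) : EReal) * ⨆ q ∈ Q, (elog (q y) - elog (pstar y))) :=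
          (Finset.sum_congr rfl fun y _ => (hterm y).symm)
      _ ≤ _ := le_refl _
  exact le_antisymm (hL_le.trans hle_R) ((iSup_le hR_le).trans hle_L)
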